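/- Let $(M,\pi)$ be a Poisson manifold. Define on $\Omega^1(M)$ the bracket $[\alpha,\beta]_\pi = L_{\pi^\sharp\alpha}\beta - L_{\pi^\sharp\beta}\alpha - d(\pi(\alpha,\beta))$ and anchor $\rho = \pi^\sharp$. Then $(T^*M, [\cdot,\cdot]_\pi, \pi^\sharp)$ is a Lie algebroid; in particular $[\cdot,\cdot]_\pi$ satisfies the Jacobi identity, the Leibniz rule $[\alpha, f\beta]_\pi = f[\alpha,\beta]_\pi + (\pi^\sharp(\alpha)f)\beta$, and $\pi^\sharp([\alpha,\beta]_\pi) = [\pi^\sharp\alpha, \pi^\sharp\beta]$. -/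

import Mathlib

open Finset

noncomputable section

/-- Partial derivative `∂_i f` of a function on `ℝⁿ`. -/
def pd {n : ℕ} (i : Fin n) (f : (Fin n → ℝ) → ℝ) : (Fin n → ℝ) → ℝ :=
  fun x => fderiv ℝ f x (Pi.single i 1)

/-- The anchor `π♯` in coordinates: `(π♯ α)^j = ∑ i, π^{ij} α_i`. -/
def sharp {n : ℕ} (π : Fin n → Fin n → (Fin n → ℝ) → ℝ)
    (α : Fin n → (Fin n → ℝ) → ℝ) : Fin n → (Fin n → ℝ) → ℝ :=
  fun j x => ∑ i : Fin n, π i j x * α i x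

/-- Lie derivative of a 1-form `β` along a vector field `X`, in coordinates:
`(L_X β)_k = X^j ∂_j β_k + β_j ∂_k X^j`. -/
def lieD {n : ℕ} (X β : Fin n → (Fin n → ℝ) → ℝ) : Fin n → (Fin n → ℝ) → ℝ :=
  fun k x => ∑ j : Fin n, (X j x * pd j (β k) x + β j x * pd k (X j) x)

/-- The pairing `π(α, β) = ∑ i j, π^{ij} α_i β_j`. -/
def pairPi {n : ℕ} (π : Fin n → Fin n → (Fin n → ℝ) → ℝ)
    (α β : Fin n → (Fin n → ℝ) → ℝ) : (Fin n → ℝ) → ℝ :=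
  fun x => ∑ i : Fin n, ∑ j : Fin n, π i j x * α i x * β j x

/-- The Koszul bracket `[α, β]_π = L_{π♯α} β - L_{π♯β} α - d(π(α,β))`
on 1-forms, in coordinates. -/
def koszul {n : ℕ} (π : Fin n → Fin n → (Fin n → ℝ) → ℝ)
    (α β : Fin n → (Fin n → ℝ) → ℝ) : Fin n → (Fin n → ℝ) → ℝ :=
  fun k x => lieD (sharp π α) β k x - lieD (sharp π β) α k x
    - pd k (pairPi π α β) x

/-- A 1-form is smooth if all its coordinate components are. -/
def Sm1 {n : ℕ} (α : Fin n → (Fin n → ℝ) → ℝ) : Prop :=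
  ∀ k, ContDiff ℝ (⊤ : ℕ∞) (α k)

namespace PdLemmas

variable {n : ℕ}

lemma pd_add {f g : (Fin n → ℝ) → ℝ} (i : Fin n) (x : Fin n → ℝ)
    (hf : DifferentiableAt ℝ f x) (hg : DifferentiableAt ℝ g x) :
    pd i (fun y => f y + g y) x = pd i f x + pd i g x := by
  simp [pd, fderiv_fun_add hf hg]

lemma pd_sub {f g : (Fin n → ℝ) → ℝ} (i : Fin n) (x : Fin n → ℝ)
    (hf : DifferentiableAt ℝ f x) (hg : DifferentiableAt ℝ g x) :
    pd i (fun y => f y - g y) x = pd i f x - pd i g x := by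
  simp [pd, fderiv_fun_sub hf hg]

lemma pd_neg {f : (Fin n → ℝ) → ℝ} (i : Fin n) (x : Fin n → ℝ) :
    pd i (fun y => -f y) x = - pd i f x := by
  simp [pd, fderiv_neg]

lemma pd_mul {f g : (Fin n → ℝ) → ℝ} (i : Fin n) (x : Fin n → ℝ)
    (hf : DifferentiableAt ℝ f x) (hg : DifferentiableAt ℝ g x) :
    pd i (fun y => f y * g y) x = pd i f x * g x + f x * pd i g x := by
  simp [pd, fderiv_fun_mul hf hg]; ring

lemma pd_sum {ι : Type*} {s : Finset ι} {f : ι → (Fin n → ℝ) → ℝ} (i : Fin n) (x : Fin n → ℝ)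
    (hf : ∀ j ∈ s, DifferentiableAt ℝ (f j) x) :
    pd i (fun y => ∑ j ∈ s, f j y) x = ∑ j ∈ s, pd i (f j) x := by
  simp [pd, fderiv_fun_sum hf]

lemma pd_const (i : Fin n) (x : Fin n → ℝ) (c : ℝ) :
    pd i (fun _ => c) x = 0 := by
  simp [pd]

lemma ContDiff.pd' {f : (Fin n → ℝ) → ℝ} (hf : ContDiff ℝ (⊤ : ℕ∞) f) (i : Fin n) :
    ContDiff ℝ (⊤ : ℕ∞) (pd i f) := by
  have h1 : ContDiff ℝ (⊤ : ℕ∞) (fderiv ℝ f) := hf.fderiv_right (by simp)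
  exact (ContinuousLinearMap.apply ℝ ℝ (Pi.single i 1)).contDiff.comp h1

lemma pd_comm {f : (Fin n → ℝ) → ℝ} (hf : ContDiff ℝ (⊤ : ℕ∞) f) (i j : Fin n) (x : Fin n → ℝ) :
    pd i (pd j f) x = pd j (pd i f) x := by
  have hsymm : IsSymmSndFDerivAt ℝ f x :=
    hf.contDiffAt.isSymmSndFDerivAt (by rw [minSmoothness_of_isRCLikeNormedField]; exact WithTop.coe_le_coe.mpr (le_top : (2 : ℕ∞) ≤ ⊤))
  have hdf : DifferentiableAt ℝ (fderiv ℝ f) x :=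
    ((hf.fderiv_right (m := (⊤ : ℕ∞)) (by simp)).differentiable (by simp)) x
  have key : ∀ v w : Fin n → ℝ,
      fderiv ℝ (fun y => fderiv ℝ f y v) x w = fderiv ℝ (fderiv ℝ f) x w v := by
    intro v w
    have : (fun y => fderiv ℝ f y v)
        = fun y => (ContinuousLinearMap.apply ℝ ℝ v) (fderiv ℝ f y) := rfl
    rw [this, fderiv_clm_apply (by fun_prop) hdf]
    simp
  show fderiv ℝ (fun y => fderiv ℝ f y (Pi.single j 1)) x (Pi.single i 1) = _
  rw [key, hsymm.eq]
  show _ = fderiv ℝ (fun y => fderiv ℝ f y (Pi.single i 1)) x (Pi.single j 1)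
  rw [key]

/-! ### sum helpers -/

lemma sum2_anti (f : Fin n → Fin n → ℝ) (h : ∀ i j, f i j = - f j i) :
    ∑ i : Fin n, ∑ j : Fin n, f i j = 0 := by
  have h2 : (∑ i : Fin n, ∑ j : Fin n, f i j) = - ∑ i : Fin n, ∑ j : Fin n, f i j := by
    calc (∑ i : Fin n, ∑ j : Fin n, f i j)
        = ∑ i : Fin n, ∑ j : Fin n, -(f j i) :=
          Finset.sum_congr rfl fun i _ => Finset.sum_congr rfl fun j _ => h i j
      _ = -(∑ i : Fin n, ∑ j : Fin n, f j i) := by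
          simp [← Finset.sum_neg_distrib]
      _ = - ∑ i : Fin n, ∑ j : Fin n, f i j := by rw [Finset.sum_comm]
  linarith

/-! ### smoothness of the basic objects -/

variable {π : Fin n → Fin n → (Fin n → ℝ) → ℝ} {α β : Fin n → (Fin n → ℝ) → ℝ}

/-! ### pointwise expansion of derivatives -/

lemma pd_sharp (hπ : ∀ i j, ContDiff ℝ (⊤ : ℕ∞) (π i j)) (hα : Sm1 α) (m j : Fin n) (x : Fin n → ℝ) :
    pd m (sharp π α j) x
      = ∑ i : Fin n, (pd m (π i j) x * α i x + π i j x * pd m (α i) x) := by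
  show pd m (fun x => ∑ i : Fin n, π i j x * α i x) x = _
  rw [pd_sum m x (fun i _ => (((hπ i j).mul (hα i)).differentiable (by simp)) x)]
  exact Finset.sum_congr rfl fun i _ => pd_mul m x (((hπ i j).differentiable (by simp)) x)
    (((hα i).differentiable (by simp)) x)

lemma pd_pairPi (hπ : ∀ i j, ContDiff ℝ (⊤ : ℕ∞) (π i j)) (hα : Sm1 α) (hβ : Sm1 β)
    (k : Fin n) (x : Fin n → ℝ) :
    pd k (pairPi π α β) x
      = ∑ i : Fin n, ∑ j : Fin n,
          (pd k (π i j) x * α i x * β j x + π i j x * pd k (α i) x * β j x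
            + π i j x * α i x * pd k (β j) x) := by
  show pd k (fun x => ∑ i : Fin n, ∑ j : Fin n, π i j x * α i x * β j x) x = _
  rw [pd_sum k x (fun i _ => ((ContDiff.sum fun j _ =>
    ((hπ i j).mul (hα i)).mul (hβ j)).differentiable (by simp) x))]
  refine Finset.sum_congr rfl fun i _ => ?_
  rw [pd_sum k x (fun j _ => ((((hπ i j).mul (hα i)).mul (hβ j)).differentiable (by simp)) x)]
  refine Finset.sum_congr rfl fun j _ => ?_
  rw [pd_mul k x ((((hπ i j).mul (hα i)).differentiable (by simp)) x)
    (((hβ j).differentiable (by simp)) x),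
    pd_mul k x (((hπ i j).differentiable (by simp)) x) (((hα i).differentiable (by simp)) x)]
  ring



/-! ### antisymmetry of derivatives -/

lemma pd_anti {π : Fin n → Fin n → (Fin n → ℝ) → ℝ}
    (hanti : ∀ i j x, π i j x = - π j i x) (m i j : Fin n) (x : Fin n → ℝ) :
    pd m (π j i) x = - pd m (π i j) x := by
  have h : π j i = fun y => -(π i j y) := funext fun y => hanti j i y
  rw [h, pd_neg]

/-! ### the closed normal form of the Koszul bracket -/

def Kf (π : Fin n → Fin n → (Fin n → ℝ) → ℝ) (α β : Fin n → (Fin n → ℝ) → ℝ) :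
    Fin n → (Fin n → ℝ) → ℝ :=
  fun k x => ∑ i : Fin n, ∑ j : Fin n,
    (π i j x * (α i x * pd j (β k) x - β i x * pd j (α k) x)
      + pd k (π i j) x * α i x * β j x)

variable {π : Fin n → Fin n → (Fin n → ℝ) → ℝ} {α β : Fin n → (Fin n → ℝ) → ℝ}

lemma sm_Kf (hπ : ∀ i j, ContDiff ℝ (⊤ : ℕ∞) (π i j)) (hα : Sm1 α) (hβ : Sm1 β) :
    Sm1 (Kf π α β) := by
  intro k
  show ContDiff ℝ (⊤ : ℕ∞) fun x => ∑ i : Fin n, ∑ j : Fin n,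
    (π i j x * (α i x * pd j (β k) x - β i x * pd j (α k) x)
      + pd k (π i j) x * α i x * β j x)
  refine ContDiff.sum fun i _ => ContDiff.sum fun j _ => ?_
  exact ((hπ i j).mul (((hα i).mul (ContDiff.pd' (hβ k) j)).sub
      ((hβ i).mul (ContDiff.pd' (hα k) j)))).add
    (((ContDiff.pd' (hπ i j) k).mul (hα i)).mul (hβ j))

lemma koszul_apply (hπ : ∀ i j, ContDiff ℝ (⊤ : ℕ∞) (π i j))
    (hanti : ∀ i j x, π i j x = - π j i x) (hα : Sm1 α) (hβ : Sm1 β)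
    (k : Fin n) (x : Fin n → ℝ) :
    koszul π α β k x = Kf π α β k x := by
  show lieD (sharp π α) β k x - lieD (sharp π β) α k x - pd k (pairPi π α β) x = _
  rw [pd_pairPi hπ hα hβ]
  show (∑ j : Fin n, (sharp π α j x * pd j (β k) x + β j x * pd k (sharp π α j) x))
      - (∑ j : Fin n, (sharp π β j x * pd j (α k) x + α j x * pd k (sharp π β j) x))
      - _ = _
  simp_rw [pd_sharp hπ hα, pd_sharp hπ hβ]
  show (∑ j : Fin n, ((∑ i : Fin n, π i j x * α i x) * pd j (β k) x
        + β j x * ∑ i : Fin n, (pd k (π i j) x * α i x + π i j x * pd k (α i) x)))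
      - (∑ j : Fin n, ((∑ i : Fin n, π i j x * β i x) * pd j (α k) x
        + α j x * ∑ i : Fin n, (pd k (π i j) x * β i x + π i j x * pd k (β i) x)))
      - _ = Kf π α β k x
  rw [← sub_eq_zero]
  show _ - (∑ i : Fin n, ∑ j : Fin n,
    (π i j x * (α i x * pd j (β k) x - β i x * pd j (α k) x)
      + pd k (π i j) x * α i x * β j x)) = 0
  simp only [Finset.sum_mul, Finset.mul_sum, mul_add,
    ← Finset.sum_add_distrib, ← Finset.sum_sub_distrib]
  apply sum2_anti
  intro i j
  rw [hanti j i x, pd_anti hanti k i j x]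
  ring

lemma koszul_eq (hπ : ∀ i j, ContDiff ℝ (⊤ : ℕ∞) (π i j))
    (hanti : ∀ i j x, π i j x = - π j i x) (hα : Sm1 α) (hβ : Sm1 β) :
    koszul π α β = Kf π α β :=
  funext fun k => funext fun x => koszul_apply hπ hanti hα hβ k x



/-! ### triple-sum permutation helpers -/

lemma sum3_comm12 (f : Fin n → Fin n → Fin n → ℝ) :
    (∑ a : Fin n, ∑ b : Fin n, ∑ c : Fin n, f a b c)
      = ∑ a : Fin n, ∑ b : Fin n, ∑ c : Fin n, f b a c :=
  Finset.sum_comm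

lemma sum3_comm23 (f : Fin n → Fin n → Fin n → ℝ) :
    (∑ a : Fin n, ∑ b : Fin n, ∑ c : Fin n, f a b c)
      = ∑ a : Fin n, ∑ b : Fin n, ∑ c : Fin n, f a c b :=
  Finset.sum_congr rfl fun a _ => Finset.sum_comm

lemma sum3_swap13 (f : Fin n → Fin n → Fin n → ℝ) :
    (∑ a : Fin n, ∑ b : Fin n, ∑ c : Fin n, f a b c)
      = ∑ a : Fin n, ∑ b : Fin n, ∑ c : Fin n, f c b a := by
  rw [sum3_comm12, sum3_comm23, sum3_comm12]

/-- `∑ f a b c = ∑ f c a b` (cyclic relabelling). -/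
lemma sum3_rotR (f : Fin n → Fin n → Fin n → ℝ) :
    (∑ a : Fin n, ∑ b : Fin n, ∑ c : Fin n, f a b c)
      = ∑ a : Fin n, ∑ b : Fin n, ∑ c : Fin n, f c a b := by
  rw [sum3_comm12, sum3_comm23]

lemma sum3_congr (f g : Fin n → Fin n → Fin n → ℝ) (h : ∀ a b c, f a b c = g a b c) :
    (∑ a : Fin n, ∑ b : Fin n, ∑ c : Fin n, f a b c)
      = ∑ a : Fin n, ∑ b : Fin n, ∑ c : Fin n, g a b c :=
  Finset.sum_congr rfl fun a _ => Finset.sum_congr rfl fun b _ =>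
    Finset.sum_congr rfl fun c _ => h a b c

lemma sum3_anti23 (f : Fin n → Fin n → Fin n → ℝ) (h : ∀ a b c, f a b c = - f a c b) :
    (∑ a : Fin n, ∑ b : Fin n, ∑ c : Fin n, f a b c) = 0 :=
  Finset.sum_eq_zero fun a _ => sum2_anti (f a) (h a)

/-! ### Part 1 : Leibniz rule -/

lemma part1 (hπ : ∀ i j, ContDiff ℝ (⊤ : ℕ∞) (π i j))
    (hanti : ∀ i j x, π i j x = - π j i x)
    (f : (Fin n → ℝ) → ℝ) (hα : Sm1 α) (hβ : Sm1 β) (hf : ContDiff ℝ (⊤ : ℕ∞) f)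
    (k : Fin n) (x : Fin n → ℝ) :
    koszul π α (fun k' x' => f x' * β k' x') k x
      = f x * koszul π α β k x + (∑ i : Fin n, sharp π α i x * pd i f x) * β k x := by
  have hfβ : Sm1 (fun k' x' => f x' * β k' x') := fun k' => hf.mul (hβ k')
  rw [koszul_apply hπ hanti hα hfβ, koszul_apply hπ hanti hα hβ]
  have hpd : ∀ jj : Fin n, pd jj (fun x' => f x' * β k x') x
      = pd jj f x * β k x + f x * pd jj (β k) x := fun jj =>
    pd_mul jj x ((hf.differentiable (by simp)) x) (((hβ k).differentiable (by simp)) x)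
  show (∑ i : Fin n, ∑ j : Fin n,
      (π i j x * (α i x * pd j (fun x' => f x' * β k x') x
          - (f x * β i x) * pd j (α k) x)
        + pd k (π i j) x * α i x * (f x * β j x))) = _
  simp only [hpd, Kf, sharp]
  rw [← sub_eq_zero]
  simp only [Finset.mul_sum, Finset.sum_mul, mul_add, mul_sub, add_mul, sub_mul,
    ← Finset.sum_add_distrib, ← Finset.sum_sub_distrib]
  apply sum2_anti
  intro i j
  ring

/-! ### Part 2 : the anchor is a morphism -/

lemma part2 (hπ : ∀ i j, ContDiff ℝ (⊤ : ℕ∞) (π i j))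
    (hanti : ∀ i j x, π i j x = - π j i x)
    (hjacobi : ∀ i j k x, ∑ m : Fin n,
      (π m i x * pd m (π j k) x + π m j x * pd m (π k i) x
        + π m k x * pd m (π i j) x) = 0)
    (hα : Sm1 α) (hβ : Sm1 β) (j : Fin n) (x : Fin n → ℝ) :
    sharp π (koszul π α β) j x
      = ∑ i : Fin n, (sharp π α i x * pd i (sharp π β j) x
          - sharp π β i x * pd i (sharp π α j) x) := by
  have hL : sharp π (koszul π α β) j x
      = ((∑ c : Fin n, ∑ a : Fin n, ∑ b : Fin n,
            π c j x * (π a b x * (α a x * pd b (β c) x)))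
        - (∑ c : Fin n, ∑ a : Fin n, ∑ b : Fin n,
            π c j x * (π a b x * (β a x * pd b (α c) x))))
        + (∑ c : Fin n, ∑ a : Fin n, ∑ b : Fin n,
            π c j x * (pd c (π a b) x * α a x * β b x)) := by
    show (∑ c : Fin n, π c j x * koszul π α β c x) = _
    simp_rw [koszul_apply hπ hanti hα hβ, Kf]
    rw [← sub_eq_zero]
    simp only [Finset.mul_sum, Finset.sum_mul, mul_add, mul_sub, add_mul, sub_mul,
      ← Finset.sum_add_distrib, ← Finset.sum_sub_distrib]
    exact sum3_anti23 _ fun a b c => by ring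
  have hR : (∑ i : Fin n, (sharp π α i x * pd i (sharp π β j) x
          - sharp π β i x * pd i (sharp π α j) x))
      = (((∑ i : Fin n, ∑ a : Fin n, ∑ b : Fin n,
            π a i x * α a x * (pd i (π b j) x * β b x))
        + (∑ i : Fin n, ∑ a : Fin n, ∑ b : Fin n,
            π a i x * α a x * (π b j x * pd i (β b) x)))
        - (∑ i : Fin n, ∑ a : Fin n, ∑ b : Fin n,
            π a i x * β a x * (pd i (π b j) x * α b x)))
        - (∑ i : Fin n, ∑ a : Fin n, ∑ b : Fin n,
            π a i x * β a x * (π b j x * pd i (α b) x)) := by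
    simp_rw [pd_sharp hπ hβ, pd_sharp hπ hα, sharp]
    rw [← sub_eq_zero]
    simp only [Finset.mul_sum, Finset.sum_mul, mul_add, mul_sub, add_mul, sub_mul,
      ← Finset.sum_add_distrib, ← Finset.sum_sub_distrib]
    exact sum3_anti23 _ fun a b c => by ring
  have e1 : (∑ c : Fin n, ∑ a : Fin n, ∑ b : Fin n,
        π c j x * (π a b x * (α a x * pd b (β c) x)))
      = ∑ i : Fin n, ∑ a : Fin n, ∑ b : Fin n,
        π a i x * α a x * (π b j x * pd i (β b) x) := by
    rw [sum3_swap13]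
    exact sum3_congr _ _ fun a b c => by ring
  have e2 : (∑ c : Fin n, ∑ a : Fin n, ∑ b : Fin n,
        π c j x * (π a b x * (β a x * pd b (α c) x)))
      = ∑ i : Fin n, ∑ a : Fin n, ∑ b : Fin n,
        π a i x * β a x * (π b j x * pd i (α b) x) := by
    rw [sum3_swap13]
    exact sum3_congr _ _ fun a b c => by ring
  have cA3 : (∑ c : Fin n, ∑ a : Fin n, ∑ b : Fin n,
        π c j x * (pd c (π a b) x * α a x * β b x))
      = ∑ a : Fin n, ∑ b : Fin n, ∑ c : Fin n,
        (π c j x * pd c (π a b) x) * (α a x * β b x) := by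
    rw [sum3_rotR]
    exact sum3_congr _ _ fun a b c => by ring
  have cB1 : (∑ i : Fin n, ∑ a : Fin n, ∑ b : Fin n,
        π a i x * α a x * (pd i (π b j) x * β b x))
      = ∑ a : Fin n, ∑ b : Fin n, ∑ c : Fin n,
        (-(π c a x * pd c (π b j) x)) * (α a x * β b x) := by
    rw [sum3_rotR]
    exact sum3_congr _ _ fun a b c => by rw [hanti c a x]; ring
  have cB3 : (∑ i : Fin n, ∑ a : Fin n, ∑ b : Fin n,
        π a i x * β a x * (pd i (π b j) x * α b x))
      = ∑ a : Fin n, ∑ b : Fin n, ∑ c : Fin n,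
        (π c b x * pd c (π j a) x) * (α a x * β b x) := by
    rw [sum3_swap13]
    exact sum3_congr _ _ fun a b c => by
      rw [hanti c b x, pd_anti hanti c a j x]; ring
  have hJ : (∑ a : Fin n, ∑ b : Fin n, ∑ c : Fin n,
        (π c j x * pd c (π a b) x) * (α a x * β b x))
      - (∑ a : Fin n, ∑ b : Fin n, ∑ c : Fin n,
        (-(π c a x * pd c (π b j) x)) * (α a x * β b x))
      + (∑ a : Fin n, ∑ b : Fin n, ∑ c : Fin n,
        (π c b x * pd c (π j a) x) * (α a x * β b x)) = 0 := by
    simp only [← Finset.sum_add_distrib, ← Finset.sum_sub_distrib]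
    refine Finset.sum_eq_zero fun a _ => Finset.sum_eq_zero fun b _ => ?_
    have h2 : (∑ c : Fin n, ((π c j x * pd c (π a b) x) * (α a x * β b x)
        - (-(π c a x * pd c (π b j) x)) * (α a x * β b x)
        + (π c b x * pd c (π j a) x) * (α a x * β b x)))
        = (∑ c : Fin n, (π c a x * pd c (π b j) x + π c b x * pd c (π j a) x
            + π c j x * pd c (π a b) x)) * (α a x * β b x) := by
      rw [Finset.sum_mul]
      exact Finset.sum_congr rfl fun c _ => by ring
    rw [h2, hjacobi a b j x, zero_mul]
  rw [hL, hR, e1, e2, cA3, cB1, cB3]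
  linarith [hJ]

/-! ### quadruple-sum helpers -/

lemma sum4_comm12 (f : Fin n → Fin n → Fin n → Fin n → ℝ) :
    (∑ a : Fin n, ∑ b : Fin n, ∑ i : Fin n, ∑ j : Fin n, f a b i j)
      = ∑ a : Fin n, ∑ b : Fin n, ∑ i : Fin n, ∑ j : Fin n, f b a i j :=
  Finset.sum_comm

lemma sum4_comm23 (f : Fin n → Fin n → Fin n → Fin n → ℝ) :
    (∑ a : Fin n, ∑ b : Fin n, ∑ i : Fin n, ∑ j : Fin n, f a b i j)
      = ∑ a : Fin n, ∑ b : Fin n, ∑ i : Fin n, ∑ j : Fin n, f a i b j :=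
  Finset.sum_congr rfl fun a _ => Finset.sum_comm

lemma sum4_comm34 (f : Fin n → Fin n → Fin n → Fin n → ℝ) :
    (∑ a : Fin n, ∑ b : Fin n, ∑ i : Fin n, ∑ j : Fin n, f a b i j)
      = ∑ a : Fin n, ∑ b : Fin n, ∑ i : Fin n, ∑ j : Fin n, f a b j i :=
  Finset.sum_congr rfl fun a _ => Finset.sum_congr rfl fun b _ => Finset.sum_comm

lemma sum4_pairswap (f : Fin n → Fin n → Fin n → Fin n → ℝ) :
    (∑ a : Fin n, ∑ b : Fin n, ∑ i : Fin n, ∑ j : Fin n, f a b i j)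
      = ∑ a : Fin n, ∑ b : Fin n, ∑ i : Fin n, ∑ j : Fin n, f i j a b := by
  rw [sum4_comm23, sum4_comm12, sum4_comm34, sum4_comm23]

lemma sum4_congr (f g : Fin n → Fin n → Fin n → Fin n → ℝ)
    (h : ∀ a b i j, f a b i j = g a b i j) :
    (∑ a : Fin n, ∑ b : Fin n, ∑ i : Fin n, ∑ j : Fin n, f a b i j)
      = ∑ a : Fin n, ∑ b : Fin n, ∑ i : Fin n, ∑ j : Fin n, g a b i j :=
  Finset.sum_congr rfl fun a _ => Finset.sum_congr rfl fun b _ =>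
    Finset.sum_congr rfl fun i _ => Finset.sum_congr rfl fun j _ => h a b i j

lemma sum4_zero (f : Fin n → Fin n → Fin n → Fin n → ℝ)
    (h : ∀ a b i j, f a b i j = 0) :
    (∑ a : Fin n, ∑ b : Fin n, ∑ i : Fin n, ∑ j : Fin n, f a b i j) = 0 :=
  Finset.sum_eq_zero fun a _ => Finset.sum_eq_zero fun b _ =>
    Finset.sum_eq_zero fun i _ => Finset.sum_eq_zero fun j _ => h a b i j

lemma sum4_anti34 (f : Fin n → Fin n → Fin n → Fin n → ℝ)
    (h : ∀ a b i j, f a b i j = - f a b j i) :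
    (∑ a : Fin n, ∑ b : Fin n, ∑ i : Fin n, ∑ j : Fin n, f a b i j) = 0 :=
  Finset.sum_eq_zero fun a _ => Finset.sum_eq_zero fun b _ => sum2_anti (f a b) (h a b)

/-! ### more derivative helpers -/

lemma pd_mul3 {f g h : (Fin n → ℝ) → ℝ} (m : Fin n) (x : Fin n → ℝ)
    (hf : DifferentiableAt ℝ f x) (hg : DifferentiableAt ℝ g x)
    (hh : DifferentiableAt ℝ h x) :
    pd m (fun y => f y * g y * h y) x
      = pd m f x * g x * h x + f x * pd m g x * h x + f x * g x * pd m h x := by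
  rw [pd_mul m x (f := fun y => f y * g y) (hf.mul hg) hh, pd_mul m x hf hg]; ring

lemma pd_Kf {π : Fin n → Fin n → (Fin n → ℝ) → ℝ} {u v : Fin n → (Fin n → ℝ) → ℝ}
    (hπ : ∀ i j, ContDiff ℝ (⊤ : ℕ∞) (π i j)) (hu : Sm1 u) (hv : Sm1 v)
    (k : Fin n) (m : Fin n) (x : Fin n → ℝ) :
    pd m (Kf π u v k) x
      = ∑ i : Fin n, ∑ j : Fin n,
        (pd m (π i j) x * u i x * pd j (v k) x
          + π i j x * pd m (u i) x * pd j (v k) x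
          + π i j x * u i x * pd m (pd j (v k)) x
          - pd m (π i j) x * v i x * pd j (u k) x
          - π i j x * pd m (v i) x * pd j (u k) x
          - π i j x * v i x * pd m (pd j (u k)) x
          + pd m (pd k (π i j)) x * u i x * v j x
          + pd k (π i j) x * pd m (u i) x * v j x
          + pd k (π i j) x * u i x * pd m (v j) x) := by
  have DA : ∀ {f : (Fin n → ℝ) → ℝ}, ContDiff ℝ (⊤ : ℕ∞) f → DifferentiableAt ℝ f x :=
    fun hf => (hf.differentiable (by simp)) x
  have hfun : Kf π u v k = fun y => ∑ i : Fin n, ∑ j : Fin n,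
      (π i j y * u i y * pd j (v k) y - π i j y * v i y * pd j (u k) y
        + pd k (π i j) y * u i y * v j y) := by
    funext y; simp only [Kf]
    exact Finset.sum_congr rfl fun i _ => Finset.sum_congr rfl fun j _ => by ring
  have c1 : ∀ i j : Fin n, ContDiff ℝ (⊤ : ℕ∞) (fun y => π i j y * u i y * pd j (v k) y) :=
    fun i j => ((hπ i j).mul (hu i)).mul (ContDiff.pd' (hv k) j)
  have c2 : ∀ i j : Fin n, ContDiff ℝ (⊤ : ℕ∞) (fun y => π i j y * v i y * pd j (u k) y) :=
    fun i j => ((hπ i j).mul (hv i)).mul (ContDiff.pd' (hu k) j)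
  have c3 : ∀ i j : Fin n, ContDiff ℝ (⊤ : ℕ∞) (fun y => pd k (π i j) y * u i y * v j y) :=
    fun i j => ((ContDiff.pd' (hπ i j) k).mul (hu i)).mul (hv j)
  rw [hfun]
  rw [pd_sum m x (fun i _ => DA (ContDiff.sum
    (fun j _ => ((c1 i j).sub (c2 i j)).add (c3 i j))))]
  refine Finset.sum_congr rfl fun i _ => ?_
  rw [pd_sum m x (fun j _ => DA (((c1 i j).sub (c2 i j)).add (c3 i j)))]
  refine Finset.sum_congr rfl fun j _ => ?_
  rw [pd_add m x (DA ((c1 i j).sub (c2 i j))) (DA (c3 i j)),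
    pd_sub m x (DA (c1 i j)) (DA (c2 i j)),
    pd_mul3 m x (DA (hπ i j)) (DA (hu i)) (DA (ContDiff.pd' (hv k) j)),
    pd_mul3 m x (DA (hπ i j)) (DA (hv i)) (DA (ContDiff.pd' (hu k) j)),
    pd_mul3 m x (DA (ContDiff.pd' (hπ i j) k)) (DA (hu i)) (DA (hv j))]
  ring

lemma djacobi {π : Fin n → Fin n → (Fin n → ℝ) → ℝ}
    (hπ : ∀ i j, ContDiff ℝ (⊤ : ℕ∞) (π i j))
    (hjacobi : ∀ i j k x, ∑ m : Fin n,
      (π m i x * pd m (π j k) x + π m j x * pd m (π k i) x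
        + π m k x * pd m (π i j) x) = 0)
    (l a b c : Fin n) (x : Fin n → ℝ) :
    (∑ d : Fin n, (pd l (π d a) x * pd d (π b c) x + π d a x * pd l (pd d (π b c)) x
      + pd l (π d b) x * pd d (π c a) x + π d b x * pd l (pd d (π c a)) x
      + pd l (π d c) x * pd d (π a b) x + π d c x * pd l (pd d (π a b)) x)) = 0 := by
  have DA : ∀ {f : (Fin n → ℝ) → ℝ}, ContDiff ℝ (⊤ : ℕ∞) f → DifferentiableAt ℝ f x :=
    fun hf => (hf.differentiable (by simp)) x
  have c1 : ∀ d : Fin n, ContDiff ℝ (⊤ : ℕ∞) (fun y => π d a y * pd d (π b c) y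
      + π d b y * pd d (π c a) y + π d c y * pd d (π a b) y) := fun d =>
    (((hπ d a).mul (ContDiff.pd' (hπ b c) d)).add
      ((hπ d b).mul (ContDiff.pd' (hπ c a) d))).add
      ((hπ d c).mul (ContDiff.pd' (hπ a b) d))
  have h0 : (fun y => ∑ d : Fin n, (π d a y * pd d (π b c) y + π d b y * pd d (π c a) y
      + π d c y * pd d (π a b) y)) = fun _ => (0:ℝ) := funext fun y => hjacobi a b c y
  have h1 : pd l (fun y => ∑ d : Fin n, (π d a y * pd d (π b c) y
      + π d b y * pd d (π c a) y + π d c y * pd d (π a b) y)) x = 0 := by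
    rw [h0]; exact pd_const l x 0
  rw [pd_sum l x (fun d _ => DA (c1 d))] at h1
  rw [Finset.sum_congr rfl (fun d (_ : d ∈ Finset.univ) => by
    rw [pd_add l x (DA (((hπ d a).mul (ContDiff.pd' (hπ b c) d)).add
        ((hπ d b).mul (ContDiff.pd' (hπ c a) d))))
      (DA ((hπ d c).mul (ContDiff.pd' (hπ a b) d))),
      pd_add l x (DA ((hπ d a).mul (ContDiff.pd' (hπ b c) d)))
        (DA ((hπ d b).mul (ContDiff.pd' (hπ c a) d))),
      pd_mul l x (DA (hπ d a)) (DA (ContDiff.pd' (hπ b c) d)),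
      pd_mul l x (DA (hπ d b)) (DA (ContDiff.pd' (hπ c a) d)),
      pd_mul l x (DA (hπ d c)) (DA (ContDiff.pd' (hπ a b) d))])] at h1
  rw [← h1]
  exact Finset.sum_congr rfl fun d _ => by
    rw [pd_comm (hπ b c) l d x, pd_comm (hπ c a) l d x, pd_comm (hπ a b) l d x]; ring


variable {u v w : Fin n → (Fin n → ℝ) → ℝ}

lemma KK_expand (hπ : ∀ i j, ContDiff ℝ (⊤ : ℕ∞) (π i j)) (hu : Sm1 u) (hv : Sm1 v) (hw : Sm1 w)
    (k : Fin n) (x : Fin n → ℝ) :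
    Kf π (Kf π u v) w k x =
    (∑ a : Fin n, ∑ b : Fin n, ∑ i : Fin n, ∑ j : Fin n,
        π a b x * π i j x * (u i x * pd j (v a) x * pd b (w k) x))
      - (∑ a : Fin n, ∑ b : Fin n, ∑ i : Fin n, ∑ j : Fin n,
        π a b x * π i j x * (v i x * pd j (u a) x * pd b (w k) x))
      + (∑ a : Fin n, ∑ b : Fin n, ∑ i : Fin n, ∑ j : Fin n,
        π a b x * pd a (π i j) x * (u i x * v j x * pd b (w k) x))
      - (∑ a : Fin n, ∑ b : Fin n, ∑ i : Fin n, ∑ j : Fin n,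
        π a b x * pd b (π i j) x * (w a x * u i x * pd j (v k) x))
      + (∑ a : Fin n, ∑ b : Fin n, ∑ i : Fin n, ∑ j : Fin n,
        π a b x * pd b (π i j) x * (w a x * v i x * pd j (u k) x))
      - (∑ a : Fin n, ∑ b : Fin n, ∑ i : Fin n, ∑ j : Fin n,
        π a b x * π i j x * (w a x * pd b (u i) x * pd j (v k) x))
      - (∑ a : Fin n, ∑ b : Fin n, ∑ i : Fin n, ∑ j : Fin n,
        π a b x * π i j x * (w a x * u i x * pd b (pd j (v k)) x))
      + (∑ a : Fin n, ∑ b : Fin n, ∑ i : Fin n, ∑ j : Fin n,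
        π a b x * π i j x * (w a x * pd b (v i) x * pd j (u k) x))
      + (∑ a : Fin n, ∑ b : Fin n, ∑ i : Fin n, ∑ j : Fin n,
        π a b x * π i j x * (w a x * v i x * pd b (pd j (u k)) x))
      - (∑ a : Fin n, ∑ b : Fin n, ∑ i : Fin n, ∑ j : Fin n,
        π a b x * pd b (pd k (π i j)) x * (w a x * u i x * v j x))
      - (∑ a : Fin n, ∑ b : Fin n, ∑ i : Fin n, ∑ j : Fin n,
        π a b x * pd k (π i j) x * (w a x * pd b (u i) x * v j x))
      - (∑ a : Fin n, ∑ b : Fin n, ∑ i : Fin n, ∑ j : Fin n,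
        π a b x * pd k (π i j) x * (w a x * u i x * pd b (v j) x))
      + (∑ a : Fin n, ∑ b : Fin n, ∑ i : Fin n, ∑ j : Fin n,
        pd k (π a b) x * π i j x * (u i x * pd j (v a) x * w b x))
      - (∑ a : Fin n, ∑ b : Fin n, ∑ i : Fin n, ∑ j : Fin n,
        pd k (π a b) x * π i j x * (v i x * pd j (u a) x * w b x))
      + (∑ a : Fin n, ∑ b : Fin n, ∑ i : Fin n, ∑ j : Fin n,
        pd k (π a b) x * pd a (π i j) x * (u i x * v j x * w b x)) := by
  show (∑ a : Fin n, ∑ b : Fin n,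
      (π a b x * (Kf π u v a x * pd b (w k) x - w a x * pd b (Kf π u v k) x)
        + pd k (π a b) x * Kf π u v a x * w b x)) = _
  simp_rw [pd_Kf hπ hu hv]
  simp only [Kf]
  rw [← sub_eq_zero]
  simp only [Finset.mul_sum, Finset.sum_mul, mul_add, mul_sub, add_mul, sub_mul,
    ← Finset.sum_add_distrib, ← Finset.sum_sub_distrib]
  exact sum4_anti34 _ fun a b i j => by ring


lemma GA (hπ : ∀ i j, ContDiff ℝ (⊤ : ℕ∞) (π i j))
    (hanti : ∀ i j x, π i j x = - π j i x)
    (hu : Sm1 u) (hv : Sm1 v) (hw : Sm1 w) (k : Fin n) (x : Fin n → ℝ) :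
    (∑ a : Fin n, ∑ b : Fin n, ∑ i : Fin n, ∑ j : Fin n,
      π a b x * π i j x * (w a x * u i x * pd b (pd j (v k)) x))
      = (∑ a : Fin n, ∑ b : Fin n, ∑ i : Fin n, ∑ j : Fin n,
      π a b x * π i j x * (u a x * w i x * pd b (pd j (v k)) x)) := by
  conv_lhs => rw [sum4_pairswap]
  exact sum4_congr _ _ fun a b c d => by rw [pd_comm (hv k) d b x]; ring

lemma GB (hπ : ∀ i j, ContDiff ℝ (⊤ : ℕ∞) (π i j))
    (hanti : ∀ i j x, π i j x = - π j i x)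
    (hu : Sm1 u) (hv : Sm1 v) (hw : Sm1 w) (k : Fin n) (x : Fin n → ℝ) :
    (∑ a : Fin n, ∑ b : Fin n, ∑ i : Fin n, ∑ j : Fin n,
      π a b x * π i j x * (w a x * pd b (u i) x * pd j (v k) x))
      = (∑ a : Fin n, ∑ b : Fin n, ∑ i : Fin n, ∑ j : Fin n,
      π a b x * π i j x * (w i x * pd j (u a) x * pd b (v k) x)) := by
  conv_lhs => rw [sum4_pairswap]
  exact sum4_congr _ _ fun a b c d => by ring

lemma GC (hπ : ∀ i j, ContDiff ℝ (⊤ : ℕ∞) (π i j))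
    (hanti : ∀ i j x, π i j x = - π j i x)
    (hu : Sm1 u) (hv : Sm1 v) (hw : Sm1 w) (k : Fin n) (x : Fin n → ℝ) :
    (∑ a : Fin n, ∑ b : Fin n, ∑ i : Fin n, ∑ j : Fin n,
      π a b x * π i j x * (v i x * pd j (u a) x * pd b (w k) x))
      = (∑ a : Fin n, ∑ b : Fin n, ∑ i : Fin n, ∑ j : Fin n,
      π a b x * π i j x * (v a x * pd b (u i) x * pd j (w k) x)) := by
  conv_lhs => rw [sum4_pairswap]
  exact sum4_congr _ _ fun a b c d => by ring

lemma GD (hπ : ∀ i j, ContDiff ℝ (⊤ : ℕ∞) (π i j))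
    (hanti : ∀ i j x, π i j x = - π j i x)
    (hu : Sm1 u) (hv : Sm1 v) (hw : Sm1 w) (k : Fin n) (x : Fin n → ℝ) :
    (∑ a : Fin n, ∑ b : Fin n, ∑ i : Fin n, ∑ j : Fin n,
      π a b x * pd k (π i j) x * (w a x * pd b (u i) x * v j x))
      = (∑ a : Fin n, ∑ b : Fin n, ∑ i : Fin n, ∑ j : Fin n,
      pd k (π a b) x * π i j x * (w i x * pd j (u a) x * v b x)) := by
  conv_lhs => rw [sum4_pairswap]
  exact sum4_congr _ _ fun a b c d => by ring

lemma GE (hπ : ∀ i j, ContDiff ℝ (⊤ : ℕ∞) (π i j))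
    (hanti : ∀ i j x, π i j x = - π j i x)
    (hu : Sm1 u) (hv : Sm1 v) (hw : Sm1 w) (k : Fin n) (x : Fin n → ℝ) :
    (∑ a : Fin n, ∑ b : Fin n, ∑ i : Fin n, ∑ j : Fin n,
      π a b x * pd k (π i j) x * (w a x * u i x * pd b (v j) x))
      + (∑ a : Fin n, ∑ b : Fin n, ∑ i : Fin n, ∑ j : Fin n,
      pd k (π a b) x * π i j x * (w i x * pd j (v a) x * u b x)) = 0 := by
  conv_lhs => rw [sum4_comm34, sum4_pairswap]
  simp only [← Finset.sum_add_distrib]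
  exact sum4_zero _ fun a b c d => by rw [pd_anti hanti k a b x]; ring

lemma GF (hπ : ∀ i j, ContDiff ℝ (⊤ : ℕ∞) (π i j))
    (hanti : ∀ i j x, π i j x = - π j i x)
    (hjacobi : ∀ i j k x, ∑ m : Fin n,
      (π m i x * pd m (π j k) x + π m j x * pd m (π k i) x
        + π m k x * pd m (π i j) x) = 0)
    (u v w : Fin n → (Fin n → ℝ) → ℝ) (k : Fin n) (x : Fin n → ℝ) :
    (∑ a : Fin n, ∑ b : Fin n, ∑ i : Fin n, ∑ j : Fin n,
    π a b x * pd a (π i j) x * (u i x * v j x * pd b (w k) x))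
      - (∑ a : Fin n, ∑ b : Fin n, ∑ i : Fin n, ∑ j : Fin n,
      π a b x * pd b (π i j) x * (u a x * v i x * pd j (w k) x))
      + (∑ a : Fin n, ∑ b : Fin n, ∑ i : Fin n, ∑ j : Fin n,
      π a b x * pd b (π i j) x * (v a x * u i x * pd j (w k) x))
      = 0 := by

  have hc3 : (∑ a : Fin n, ∑ b : Fin n, ∑ i : Fin n, ∑ j : Fin n,
        π a b x * pd a (π i j) x * (u i x * v j x * pd b (w k) x))
        = (∑ a : Fin n, ∑ b : Fin n, ∑ c : Fin n, ∑ d : Fin n,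
        (π d c x * pd d (π a b) x) * (u a x * v b x * pd c (w k) x)) := by
      conv_lhs => rw [sum4_comm12, sum4_pairswap]

  have hc4 : (∑ a : Fin n, ∑ b : Fin n, ∑ i : Fin n, ∑ j : Fin n,
        π a b x * pd b (π i j) x * (u a x * v i x * pd j (w k) x))
        = (∑ a : Fin n, ∑ b : Fin n, ∑ c : Fin n, ∑ d : Fin n,
        (-(π d a x * pd d (π b c) x)) * (u a x * v b x * pd c (w k) x)) := by
      conv_lhs => rw [sum4_comm23, sum4_comm34]
      exact sum4_congr _ _ fun a b c d => by rw [hanti a d x]; ring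

  have hc5 : (∑ a : Fin n, ∑ b : Fin n, ∑ i : Fin n, ∑ j : Fin n,
        π a b x * pd b (π i j) x * (v a x * u i x * pd j (w k) x))
        = (∑ a : Fin n, ∑ b : Fin n, ∑ c : Fin n, ∑ d : Fin n,
        (π d b x * pd d (π c a) x) * (u a x * v b x * pd c (w k) x)) := by
      conv_lhs => rw [sum4_pairswap, sum4_comm23]
      exact sum4_congr _ _ fun a b c d => by rw [hanti b d x, pd_anti hanti d c a x]; ring

  have J0 : (∑ a : Fin n, ∑ b : Fin n, ∑ c : Fin n,
      ((∑ d : Fin n, (π d a x * pd d (π b c) x + π d b x * pd d (π c a) x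
        + π d c x * pd d (π a b) x)) * (u a x * v b x * pd c (w k) x))) = 0 :=
    Finset.sum_eq_zero fun a _ => Finset.sum_eq_zero fun b _ =>
      Finset.sum_eq_zero fun c _ => by rw [hjacobi a b c x, zero_mul]
  rw [hc3, hc4, hc5, ← J0]
  simp only [Finset.sum_mul, ← Finset.sum_add_distrib, ← Finset.sum_sub_distrib]
  exact sum4_congr _ _ fun a b c d => by ring

lemma GG (hπ : ∀ i j, ContDiff ℝ (⊤ : ℕ∞) (π i j))
    (hanti : ∀ i j x, π i j x = - π j i x)
    (hjacobi : ∀ i j k x, ∑ m : Fin n,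
      (π m i x * pd m (π j k) x + π m j x * pd m (π k i) x
        + π m k x * pd m (π i j) x) = 0)
    (u v w : Fin n → (Fin n → ℝ) → ℝ) (k : Fin n) (x : Fin n → ℝ) :
    (∑ a : Fin n, ∑ b : Fin n, ∑ i : Fin n, ∑ j : Fin n,
    pd k (π a b) x * pd a (π i j) x * (u i x * v j x * w b x))
      + (∑ a : Fin n, ∑ b : Fin n, ∑ i : Fin n, ∑ j : Fin n,
      pd k (π a b) x * pd a (π i j) x * (v i x * w j x * u b x))
      + (∑ a : Fin n, ∑ b : Fin n, ∑ i : Fin n, ∑ j : Fin n,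
      pd k (π a b) x * pd a (π i j) x * (w i x * u j x * v b x))
      - (∑ a : Fin n, ∑ b : Fin n, ∑ i : Fin n, ∑ j : Fin n,
      π a b x * pd b (pd k (π i j)) x * (w a x * u i x * v j x))
      - (∑ a : Fin n, ∑ b : Fin n, ∑ i : Fin n, ∑ j : Fin n,
      π a b x * pd b (pd k (π i j)) x * (u a x * v i x * w j x))
      - (∑ a : Fin n, ∑ b : Fin n, ∑ i : Fin n, ∑ j : Fin n,
      π a b x * pd b (pd k (π i j)) x * (v a x * w i x * u j x))
      = 0 := by

  have hg15a : (∑ a : Fin n, ∑ b : Fin n, ∑ i : Fin n, ∑ j : Fin n,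
        pd k (π a b) x * pd a (π i j) x * (u i x * v j x * w b x))
        = (∑ a : Fin n, ∑ b : Fin n, ∑ c : Fin n, ∑ d : Fin n,
        (pd k (π d c) x * pd d (π a b) x) * (u a x * v b x * w c x)) := by
      conv_lhs => rw [sum4_comm12, sum4_pairswap]

  have hg15b : (∑ a : Fin n, ∑ b : Fin n, ∑ i : Fin n, ∑ j : Fin n,
        pd k (π a b) x * pd a (π i j) x * (v i x * w j x * u b x))
        = (∑ a : Fin n, ∑ b : Fin n, ∑ c : Fin n, ∑ d : Fin n,
        (pd k (π d a) x * pd d (π b c) x) * (u a x * v b x * w c x)) := by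
      conv_lhs => rw [sum4_comm12, sum4_comm23, sum4_comm34]
      exact sum4_congr _ _ fun a b c d => by ring

  have hg15c : (∑ a : Fin n, ∑ b : Fin n, ∑ i : Fin n, ∑ j : Fin n,
        pd k (π a b) x * pd a (π i j) x * (w i x * u j x * v b x))
        = (∑ a : Fin n, ∑ b : Fin n, ∑ c : Fin n, ∑ d : Fin n,
        (pd k (π d b) x * pd d (π c a) x) * (u a x * v b x * w c x)) := by
      conv_lhs => rw [sum4_pairswap, sum4_comm23, sum4_pairswap]
      exact sum4_congr _ _ fun a b c d => by ring

  have hg10a : (∑ a : Fin n, ∑ b : Fin n, ∑ i : Fin n, ∑ j : Fin n,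
        π a b x * pd b (pd k (π i j)) x * (w a x * u i x * v j x))
        = (∑ a : Fin n, ∑ b : Fin n, ∑ c : Fin n, ∑ d : Fin n,
        (-(π d c x * pd k (pd d (π a b)) x)) * (u a x * v b x * w c x)) := by
      conv_lhs => rw [sum4_pairswap]
      exact sum4_congr _ _ fun a b c d => by rw [hanti c d x, pd_comm (hπ a b) d k x]; ring

  have hg10b : (∑ a : Fin n, ∑ b : Fin n, ∑ i : Fin n, ∑ j : Fin n,
        π a b x * pd b (pd k (π i j)) x * (u a x * v i x * w j x))
        = (∑ a : Fin n, ∑ b : Fin n, ∑ c : Fin n, ∑ d : Fin n,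
        (-(π d a x * pd k (pd d (π b c)) x)) * (u a x * v b x * w c x)) := by
      conv_lhs => rw [sum4_comm23, sum4_comm34]
      exact sum4_congr _ _ fun a b c d => by rw [hanti a d x, pd_comm (hπ b c) d k x]; ring

  have hg10c : (∑ a : Fin n, ∑ b : Fin n, ∑ i : Fin n, ∑ j : Fin n,
        π a b x * pd b (pd k (π i j)) x * (v a x * w i x * u j x))
        = (∑ a : Fin n, ∑ b : Fin n, ∑ c : Fin n, ∑ d : Fin n,
        (-(π d b x * pd k (pd d (π c a)) x)) * (u a x * v b x * w c x)) := by
      conv_lhs => rw [sum4_comm34, sum4_pairswap, sum4_comm23]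
      exact sum4_congr _ _ fun a b c d => by rw [hanti b d x, pd_comm (hπ c a) d k x]; ring

  have J0 : (∑ a : Fin n, ∑ b : Fin n, ∑ c : Fin n,
      ((∑ d : Fin n, (pd k (π d a) x * pd d (π b c) x + π d a x * pd k (pd d (π b c)) x
        + pd k (π d b) x * pd d (π c a) x + π d b x * pd k (pd d (π c a)) x
        + pd k (π d c) x * pd d (π a b) x + π d c x * pd k (pd d (π a b)) x))
        * (u a x * v b x * w c x))) = 0 :=
    Finset.sum_eq_zero fun a _ => Finset.sum_eq_zero fun b _ =>
      Finset.sum_eq_zero fun c _ => by rw [djacobi hπ hjacobi k a b c x, zero_mul]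
  rw [hg15a, hg15b, hg15c, hg10a, hg10b, hg10c, ← J0]
  simp only [Finset.sum_mul, ← Finset.sum_add_distrib, ← Finset.sum_sub_distrib]
  exact sum4_congr _ _ fun a b c d => by ring

lemma part3 (hπ : ∀ i j, ContDiff ℝ (⊤ : ℕ∞) (π i j))
    (hanti : ∀ i j x, π i j x = - π j i x)
    (hjacobi : ∀ i j k x, ∑ m : Fin n,
      (π m i x * pd m (π j k) x + π m j x * pd m (π k i) x
        + π m k x * pd m (π i j) x) = 0)
    {γ : Fin n → (Fin n → ℝ) → ℝ}
    (hα : Sm1 α) (hβ : Sm1 β) (hγ : Sm1 γ) (k : Fin n) (x : Fin n → ℝ) :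
    koszul π (koszul π α β) γ k x + koszul π (koszul π β γ) α k x
      + koszul π (koszul π γ α) β k x = 0 := by
  rw [koszul_eq hπ hanti hα hβ, koszul_eq hπ hanti hβ hγ, koszul_eq hπ hanti hγ hα]
  rw [koszul_apply hπ hanti (sm_Kf hπ hα hβ) hγ k x,
    koszul_apply hπ hanti (sm_Kf hπ hβ hγ) hα k x,
    koszul_apply hπ hanti (sm_Kf hπ hγ hα) hβ k x]
  rw [KK_expand hπ hα hβ hγ k x, KK_expand hπ hβ hγ hα k x, KK_expand hπ hγ hα hβ k x]
  linarith [GA hπ hanti hα hβ hγ k x, GA hπ hanti hβ hγ hα k x, GA hπ hanti hγ hα hβ k x,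
    GB hπ hanti hα hβ hγ k x, GB hπ hanti hβ hγ hα k x, GB hπ hanti hγ hα hβ k x,
    GC hπ hanti hα hβ hγ k x, GC hπ hanti hβ hγ hα k x, GC hπ hanti hγ hα hβ k x,
    GD hπ hanti hα hβ hγ k x, GD hπ hanti hβ hγ hα k x, GD hπ hanti hγ hα hβ k x,
    GE hπ hanti hα hβ hγ k x, GE hπ hanti hβ hγ hα k x, GE hπ hanti hγ hα hβ k x,
    GF hπ hanti hjacobi α β γ k x, GF hπ hanti hjacobi β γ α k x,
    GF hπ hanti hjacobi γ α β k x,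
    GG hπ hanti hjacobi α β γ k x]

end PdLemmas

/-- For a Poisson manifold `(M, π)` (in coordinates: `π` antisymmetric and
`[π,π] = 0`), the cotangent bundle with the Koszul bracket and anchor `π♯` is a
Lie algebroid: the Leibniz rule holds, the anchor preserves brackets, and the
Koszul bracket satisfies the Jacobi identity. -/
theorem cotangent_lie_algebroid_of_poisson {n : ℕ}
    (π : Fin n → Fin n → (Fin n → ℝ) → ℝ)
    (hπsmooth : ∀ i j, ContDiff ℝ (⊤ : ℕ∞) (π i j))
    (hanti : ∀ i j x, π i j x = - π j i x)
    (hjacobi : ∀ i j k x, ∑ m : Fin n,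
      (π m i x * pd m (π j k) x + π m j x * pd m (π k i) x
        + π m k x * pd m (π i j) x) = 0) :
    (∀ (α β : Fin n → (Fin n → ℝ) → ℝ) (f : (Fin n → ℝ) → ℝ),
        Sm1 α → Sm1 β → ContDiff ℝ (⊤ : ℕ∞) f →
        ∀ k x, koszul π α (fun k' x' => f x' * β k' x') k x
          = f x * koszul π α β k x + (∑ i : Fin n, sharp π α i x * pd i f x) * β k x)
    ∧ (∀ α β : Fin n → (Fin n → ℝ) → ℝ, Sm1 α → Sm1 β →
        ∀ j x, sharp π (koszul π α β) j x
          = ∑ i : Fin n, (sharp π α i x * pd i (sharp π β j) x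
              - sharp π β i x * pd i (sharp π α j) x))
    ∧ (∀ α β γ : Fin n → (Fin n → ℝ) → ℝ, Sm1 α → Sm1 β → Sm1 γ →
        ∀ k x, koszul π (koszul π α β) γ k x + koszul π (koszul π β γ) α k x
          + koszul π (koszul π γ α) β k x = 0) := by
  exact ⟨fun α β f hα hβ hf k x => PdLemmas.part1 hπsmooth hanti f hα hβ hf k x,
    fun α β hα hβ j x => PdLemmas.part2 hπsmooth hanti hjacobi hα hβ j x,
    fun α β γ hα hβ hγ k x => PdLemmas.part3 hπsmooth hanti hjacobi hα hβ hγ k x⟩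

end
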